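/- arXiv:2409.06376 — 2 statements merged into one kernel-verified Lean document; each statement's English description precedes it below -/
import Mathlib

section
/- Let C ⊆ ℕ^p be an integer cone and ⪯ an admissible total order on ℕ^p. Then every ordinary C-semigroup S_c = {0} ∪ {x ∈ C : c ⪯ x} (c ∈ C) is a saturated semigroup. -/
open Set BigOperators

/-- `C` is an integer cone: the intersection with `ℕ^p` of the set of nonnegative
real linear combinations of a finite set `A ⊆ ℕ^p`. -/
def IsIntegerCone (p : ℕ) (C : Set (Fin p → ℕ)) : Prop :=
  ∃ A : Finset (Fin p → ℕ),
    C = {x : Fin p → ℕ | ∃ l : (Fin p → ℕ) → ℝ,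
      (∀ a, 0 ≤ l a) ∧ ∀ i, (x i : ℝ) = ∑ a ∈ A, l a * (a i : ℝ)}

/-- An admissible total order on `ℕ^p`: total, compatible with addition,
with `0` minimum, and with finite down-sets. -/
structure AdmissibleOrder (p : ℕ) where
  le : (Fin p → ℕ) → (Fin p → ℕ) → Prop
  le_refl : ∀ x, le x x
  le_antisymm : ∀ x y, le x y → le y x → x = y
  le_trans : ∀ x y z, le x y → le y z → le x z
  le_total : ∀ x y, le x y ∨ le y x
  add_right : ∀ x y z, le x y → le (x + z) (y + z)
  zero_le : ∀ x, le 0 x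
  finite_le : ∀ f, {x : Fin p → ℕ | le x f}.Finite

/-- Strict version of an admissible order. -/
def AdmissibleOrder.lt {p : ℕ} (O : AdmissibleOrder p) (x y : Fin p → ℕ) : Prop :=
  O.le x y ∧ x ≠ y

/-- `S` is a `C`-semigroup: a submonoid of `ℕ^p` contained in `C` with finite complement in `C`. -/
def IsCSemigroup {p : ℕ} (C S : Set (Fin p → ℕ)) : Prop :=
  S ⊆ C ∧ 0 ∈ S ∧ (∀ x ∈ S, ∀ y ∈ S, x + y ∈ S) ∧ (C \ S).Finite

/-- `f` is the Frobenius element of `S`: the `⪯`-maximum of `C \ S`. -/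
def IsFrob {p : ℕ} (O : AdmissibleOrder p) (C S : Set (Fin p → ℕ)) (f : Fin p → ℕ) : Prop :=
  f ∈ C \ S ∧ ∀ x ∈ C \ S, O.le x f

/-- `B(f) = {x ∈ C : f - x ∈ C}`. -/
def BSet {p : ℕ} (C : Set (Fin p → ℕ)) (f : Fin p → ℕ) : Set (Fin p → ℕ) :=
  {x | x ∈ C ∧ ∃ y ∈ C, x + y = f}

/-- `N(f) = #{x ∈ C \ {0} : x ⪯ f}`. -/
noncomputable def NNum {p : ℕ} (O : AdmissibleOrder p) (C : Set (Fin p → ℕ)) (f : Fin p → ℕ) : ℕ :=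
  {x | x ∈ C ∧ x ≠ 0 ∧ O.le x f}.ncard

/-- The genus of `S`: the number of gaps `#(C \ S)`. -/
noncomputable def genusOf {p : ℕ} (C S : Set (Fin p → ℕ)) : ℕ := (C \ S).ncard

/-- The number of small elements `n(S) = #{s ∈ S : s ≺ Fb(S)}`; an element is smaller than
the Frobenius element iff it is strictly smaller than some gap. -/
noncomputable def smallCount {p : ℕ} (O : AdmissibleOrder p) (C S : Set (Fin p → ℕ)) : ℕ :=
  {s | s ∈ S ∧ ∃ h ∈ C \ S, O.lt s h}.ncard

/-- The minimal generating set of `S`. -/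
def msg {p : ℕ} (S : Set (Fin p → ℕ)) : Set (Fin p → ℕ) :=
  (S \ {0}) \ {x | ∃ a ∈ S \ {0}, ∃ b ∈ S \ {0}, a + b = x}

/-- `S` is a `B`-semigroup with respect to `f`. -/
def IsBSemigroup {p : ℕ} (O : AdmissibleOrder p) (C S : Set (Fin p → ℕ)) (f : Fin p → ℕ) : Prop :=
  IsCSemigroup C S ∧ IsFrob O C S f ∧ C \ BSet C f ⊆ S

/-- `a = α(S)`, the `⪯`-minimum of `(S \ {0}) ∩ B(f)`, with the convention `α(S) = f`
when `S ∩ B(f) = {0}`. -/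
def IsAlpha {p : ℕ} (O : AdmissibleOrder p) (C S : Set (Fin p → ℕ)) (f a : Fin p → ℕ) : Prop :=
  (a ∈ S ∧ a ≠ 0 ∧ a ∈ BSet C f ∧ ∀ x ∈ S, x ≠ 0 → x ∈ BSet C f → O.le a x)
  ∨ ((∀ x ∈ S ∩ BSet C f, x = 0) ∧ a = f)

/-- `x` is a special gap of `T`. -/
def SpecialGap {p : ℕ} (C T : Set (Fin p → ℕ)) (x : Fin p → ℕ) : Prop :=
  x ∈ C \ T ∧ x + x ∈ T ∧ ∀ t ∈ T, t ≠ 0 → x + t ∈ T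

/-- `l = λ(S)`, the `⪯`-largest gap of `S` lying outside `B(f)` (no convention case). -/
def IsLambdaGap {p : ℕ} (O : AdmissibleOrder p) (C S : Set (Fin p → ℕ)) (f l : Fin p → ℕ) : Prop :=
  l ∈ C \ S ∧ l ∉ BSet C f ∧ ∀ x ∈ C \ S, x ∉ BSet C f → O.le x l

/-- `l = λ(S)`, with the convention `λ(S) = 0` when `S` has no gap outside `B(f)`. -/
def IsLambda {p : ℕ} (O : AdmissibleOrder p) (C S : Set (Fin p → ℕ)) (f l : Fin p → ℕ) : Prop :=
  IsLambdaGap O C S f l ∨ ((∀ x ∈ C \ S, x ∈ BSet C f) ∧ l = 0)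

/-- `x ≤_C y` iff `y - x ∈ C`. -/
def leC {p : ℕ} (C : Set (Fin p → ℕ)) (x y : Fin p → ℕ) : Prop := ∃ d ∈ C, x + d = y

/-- The ordinary `C`-semigroup `S_c = {0} ∪ {x ∈ C : c ⪯ x}`. -/
def ordinarySemigroup {p : ℕ} (O : AdmissibleOrder p) (C : Set (Fin p → ℕ))
    (c : Fin p → ℕ) : Set (Fin p → ℕ) :=
  insert 0 {x | x ∈ C ∧ O.le c x}

/-- `S` is an arf semigroup in `C`. -/
def ArfSemigroup {p : ℕ} (C S : Set (Fin p → ℕ)) : Prop :=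
  ∀ x ∈ S, ∀ y ∈ S, ∀ z ∈ S, leC C z y → leC C y x →
    ∀ w : Fin p → ℕ, w + z = x + y → w ∈ S

/-- `S` is a saturated semigroup in `C`: whenever `s, s₁, …, s_r ∈ S` with `s_i ≤_C s`,
and `z : Fin r → ℤ` with `z₁s₁ + ⋯ + z_rs_r ∈ C` (as an element `t` of `ℕ^p`),
then `s + z₁s₁ + ⋯ + z_rs_r = s + t ∈ S`. -/
def SaturatedSemigroup {p : ℕ} (C S : Set (Fin p → ℕ)) : Prop :=
  ∀ (r : ℕ) (s : Fin p → ℕ) (si : Fin r → (Fin p → ℕ)) (z : Fin r → ℤ),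
    s ∈ S → (∀ i, si i ∈ S) → (∀ i, leC C (si i) s) →
    ∀ t ∈ C, (∀ j, (t j : ℤ) = ∑ i, z i * (si i j : ℤ)) → s + t ∈ S

lemma IsIntegerCone.add_mem {p : ℕ} {C : Set (Fin p → ℕ)} (hC : IsIntegerCone p C)
    {x y : Fin p → ℕ} (hx : x ∈ C) (hy : y ∈ C) : x + y ∈ C := by
  obtain ⟨A, rfl⟩ := hC
  obtain ⟨l, hl, hlx⟩ := hx
  obtain ⟨m, hm, hmy⟩ := hy
  refine ⟨l + m, fun a => add_nonneg (hl a) (hm a), fun i => ?_⟩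
  simp only [Pi.add_apply, Nat.cast_add, add_mul, Finset.sum_add_distrib, hlx i, hmy i]

lemma AdmissibleOrder.le_add_right {p : ℕ} (O : AdmissibleOrder p) (x y : Fin p → ℕ) :
    O.le x (x + y) := by
  simpa [add_comm] using O.add_right 0 y x (O.zero_le y)

lemma eq_zero_of_leC_zero {p : ℕ} {C : Set (Fin p → ℕ)} {x : Fin p → ℕ} (h : leC C x 0) :
    x = 0 := by
  obtain ⟨d, -, hd⟩ := h
  exact (add_eq_zero.mp hd).1

lemma add_mem_ordinarySemigroup {p : ℕ} {C : Set (Fin p → ℕ)} (hC : IsIntegerCone p C)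
    (O : AdmissibleOrder p) {c s t : Fin p → ℕ} (hsC : s ∈ C) (hcs : O.le c s) (ht : t ∈ C) :
    s + t ∈ ordinarySemigroup O C c :=
  Or.inr ⟨hC.add_mem hsC ht, O.le_trans _ _ _ hcs (O.le_add_right s t)⟩

theorem statement13_general (p : ℕ) (C : Set (Fin p → ℕ)) (hC : IsIntegerCone p C)
    (O : AdmissibleOrder p) (c : Fin p → ℕ) :
    SaturatedSemigroup C (ordinarySemigroup O C c) := by
  intro r s si z hs _ hle t ht htz
  rcases hs with rfl | ⟨hsC, hcs⟩
  · have hsi : ∀ i, si i = 0 := fun i => eq_zero_of_leC_zero (hle i)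
    have ht0 : t = 0 := by
      funext j
      simpa [hsi] using htz j
    simp [ht0, ordinarySemigroup]
  · exact add_mem_ordinarySemigroup hC O hsC hcs ht

/-- Every ordinary C-semigroup is a saturated semigroup. -/
theorem statement13 (p : ℕ) (hp : 0 < p) (C : Set (Fin p → ℕ)) (hC : IsIntegerCone p C)
    (O : AdmissibleOrder p) (c : Fin p → ℕ) (hc : c ∈ C) :
    SaturatedSemigroup C (ordinarySemigroup O C c) :=
  statement13_general p C hC O c
end

section
/- Fix the graded lexicographic order ⪯ on ℕ². Let k ≥ 1 be an integer, let m = (m₁, m₂) ∈ ℕ² \ {0}, write π(x) = x₁ + x₂, and let S = {0, m, 2m, …, (k−1)m} ∪ {x ∈ ℕ² : km ⪯ x} be the mult-embedded ℕ²-semigroup with multiplicity m and conductor km. Then msg(S) is the union of the four sets {m}, {x ∈ ℕ² : km ≺ x ≺ (k+1)m}, {x ∈ ℕ² : (k+1)π(m) ≤ π(x) ≤ 2kπ(m) − 1 and x₂ < m₂}, and {x ∈ ℕ² : (k+1)π(m) + 1 ≤ π(x) ≤ 2kπ(m) + 1 and x₁ < m₁}; consequently e(S) = ((4k − 1)π(m)²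 + π(m) + 4m₁)/2. -/
open Set

/-- The graded lexicographic order on ℕ². -/
def glexLe (x y : ℕ × ℕ) : Prop :=
  x.1 + x.2 < y.1 + y.2 ∨ (x.1 + x.2 = y.1 + y.2 ∧ x.1 ≤ y.1)

/-- The strict graded lexicographic order on ℕ². -/
def glexLt (x y : ℕ × ℕ) : Prop :=
  x.1 + x.2 < y.1 + y.2 ∨ (x.1 + x.2 = y.1 + y.2 ∧ x.1 < y.1)

/-- The minimal generating set of an ℕ²-semigroup. -/
def msg2 (S : Set (ℕ × ℕ)) : Set (ℕ × ℕ) :=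
  (S \ {0}) \ {x | ∃ a ∈ S \ {0}, ∃ b ∈ S \ {0}, a + b = x}

/-- The ordinary ℕ²-semigroup S_c = {0} ∪ {x : c ⪯ x} for the graded lexicographic order. -/
def ord2 (c : ℕ × ℕ) : Set (ℕ × ℕ) :=
  insert 0 {x | glexLe c x}

/-- The mult-embedded ℕ²-semigroup {0, m, 2m, …, (k-1)m} ∪ {x : km ⪯ x}. -/
def multEmb (k : ℕ) (m : ℕ × ℕ) : Set (ℕ × ℕ) :=
  {x | ∃ i < k, x = i • m} ∪ {x | glexLe (k • m) x}

/-- ν(S) = #{x ∈ S : x ≤ h componentwise for some gap h}. -/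
noncomputable def nu2 (S : Set (ℕ × ℕ)) : ℕ :=
  {x | x ∈ S ∧ ∃ h, h ∉ S ∧ x.1 ≤ h.1 ∧ x.2 ≤ h.2}.ncard

/-- γ(S) = #{x ∈ ℕ² : x ≤ h componentwise for some gap h}. -/
noncomputable def gamma2 (S : Set (ℕ × ℕ)) : ℕ :=
  {x : ℕ × ℕ | ∃ h, h ∉ S ∧ x.1 ≤ h.1 ∧ x.2 ≤ h.2}.ncard

/-- n(S) = #{s ∈ S : s ≺ f}, the number of small elements relative to f = Fb(S). -/
noncomputable def smallCount2 (S : Set (ℕ × ℕ)) (f : ℕ × ℕ) : ℕ :=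
  {s | s ∈ S ∧ glexLt s f}.ncard

/-- N(f) = #{x ∈ ℕ² \ {0} : x ⪯ f}. -/
noncomputable def NNum2 (f : ℕ × ℕ) : ℕ :=
  {x : ℕ × ℕ | x ≠ 0 ∧ glexLe x f}.ncard

lemma smul_fst' (i : ℕ) (m : ℕ × ℕ) : (i • m).1 = i * m.1 := by simp
lemma smul_snd' (i : ℕ) (m : ℕ × ℕ) : (i • m).2 = i * m.2 := by simp

lemma nz_iff {x : ℕ × ℕ} : x ≠ 0 ↔ 1 ≤ x.1 + x.2 := by
  rcases x with ⟨a, b⟩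
  simp [Prod.ext_iff]; omega

lemma mem_multEmb {k : ℕ} {m x : ℕ × ℕ} :
    x ∈ multEmb k m ↔ (∃ i, i < k ∧ x.1 = i * m.1 ∧ x.2 = i * m.2) ∨
      (k * m.1 + k * m.2 < x.1 + x.2 ∨ (k * m.1 + k * m.2 = x.1 + x.2 ∧ k * m.1 ≤ x.1)) := by
  simp [multEmb, glexLe, Prod.ext_iff, smul_fst', smul_snd']


lemma mem_multEmb_nz {k : ℕ} {m x : ℕ × ℕ} (hm : m ≠ 0) (hx : x ∈ multEmb k m)
    (hx0 : x ≠ 0) :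
    (∃ i, 1 ≤ i ∧ i < k ∧ x.1 = i * m.1 ∧ x.2 = i * m.2) ∨
      (k * m.1 + k * m.2 < x.1 + x.2 ∨ (k * m.1 + k * m.2 = x.1 + x.2 ∧ k * m.1 ≤ x.1)) := by
  rcases mem_multEmb.1 hx with (⟨i, hik, h1, h2⟩ | h)
  · left
    refine ⟨i, ?_, hik, h1, h2⟩
    rcases Nat.eq_zero_or_pos i with rfl | hi
    · exfalso; exact hx0 (by rcases x with ⟨a,b⟩; simp_all [Prod.ext_iff])
    · exact hi
  · exact Or.inr h

lemma mem_S_of_glex {k : ℕ} {m x : ℕ × ℕ}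
    (h : k * m.1 + k * m.2 < x.1 + x.2 ∨ (k * m.1 + k * m.2 = x.1 + x.2 ∧ k * m.1 ≤ x.1)) :
    x ∈ multEmb k m := mem_multEmb.2 (Or.inr h)

lemma mem_S_mul {k : ℕ} {m : ℕ × ℕ} (i : ℕ) (h : i < k) : i • m ∈ multEmb k m :=
  mem_multEmb.2 (Or.inl ⟨i, h, rfl, rfl⟩)

lemma m_mem {k : ℕ} {m : ℕ × ℕ} (hk : 1 ≤ k) : m ∈ multEmb k m := by
  rcases eq_or_lt_of_le hk with rfl | hk2
  · exact mem_S_of_glex (by right; constructor <;> simp)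
  · simpa using mem_S_mul 1 hk2

lemma hp_of {m : ℕ × ℕ} (hm : m ≠ 0) : 1 ≤ m.1 + m.2 := nz_iff.1 hm

def Uset (k : ℕ) (m : ℕ × ℕ) : Set (ℕ × ℕ) :=
  ({m} ∪
    {x : ℕ × ℕ | glexLt (k • m) x ∧ glexLt x ((k + 1) • m)} ∪
    {x : ℕ × ℕ | (k + 1) * (m.1 + m.2) ≤ x.1 + x.2 ∧
      x.1 + x.2 ≤ 2 * k * (m.1 + m.2) - 1 ∧ x.2 < m.2} ∪
    {x : ℕ × ℕ | (k + 1) * (m.1 + m.2) + 1 ≤ x.1 + x.2 ∧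
      x.1 + x.2 ≤ 2 * k * (m.1 + m.2) + 1 ∧ x.1 < m.1})

lemma mem_U {k : ℕ} {m x : ℕ × ℕ} :
    x ∈ Uset k m ↔
      (x.1 = m.1 ∧ x.2 = m.2) ∨
      ((k * m.1 + k * m.2 < x.1 + x.2 ∨ (k * m.1 + k * m.2 = x.1 + x.2 ∧ k * m.1 < x.1)) ∧
        (x.1 + x.2 < (k+1) * m.1 + (k+1) * m.2 ∨
          (x.1 + x.2 = (k+1) * m.1 + (k+1) * m.2 ∧ x.1 < (k+1) * m.1))) ∨
      ((k + 1) * (m.1 + m.2) ≤ x.1 + x.2 ∧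
        x.1 + x.2 ≤ 2 * k * (m.1 + m.2) - 1 ∧ x.2 < m.2) ∨
      ((k + 1) * (m.1 + m.2) + 1 ≤ x.1 + x.2 ∧
        x.1 + x.2 ≤ 2 * k * (m.1 + m.2) + 1 ∧ x.1 < m.1) := by
  simp [Uset, glexLt, Prod.ext_iff, smul_fst', smul_snd', or_assoc]

lemma U_subset_msg {k : ℕ} (hk : 1 ≤ k) {m : ℕ × ℕ} (hm : m ≠ 0) :
    Uset k m ⊆ msg2 (multEmb k m) := by
  have hp := hp_of hm
  have hm1 : m.1 ≤ k * m.1 := Nat.le_mul_of_pos_left m.1 hk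
  have hm2 : m.2 ≤ k * m.2 := Nat.le_mul_of_pos_left m.2 hk
  have hr1 : (k + 1) * (m.1 + m.2) = k * m.1 + k * m.2 + (m.1 + m.2) := by ring
  have hr2 : 2 * k * (m.1 + m.2) = 2 * (k * m.1) + 2 * (k * m.2) := by ring
  have hr3 : (k + 1) * m.1 = k * m.1 + m.1 := by ring
  have hr4 : (k + 1) * m.2 = k * m.2 + m.2 := by ring
  intro x hx
  rw [mem_U] at hx
  refine ⟨⟨?_, ?_⟩, ?_⟩
  · -- x ∈ multEmb k m
    rcases hx with h | h | h | h
    · have : x = m := Prod.ext h.1 h.2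
      rw [this]; exact m_mem hk
    · exact mem_S_of_glex (by omega)
    · exact mem_S_of_glex (by omega)
    · exact mem_S_of_glex (by omega)
  · -- x ≠ 0
    rw [Set.mem_singleton_iff, ← ne_eq, nz_iff]
    rcases x with ⟨x1, x2⟩
    rcases hx with h | h | h | h <;> simp at h ⊢ <;> omega
  · -- not a sum
    rintro ⟨a, ⟨haS, ha0⟩, b, ⟨hbS, hb0⟩, hab⟩
    have hab1 : a.1 + b.1 = x.1 := congrArg Prod.fst hab
    have hab2 : a.2 + b.2 = x.2 := congrArg Prod.snd hab
    rcases mem_multEmb_nz hm haS ha0 with ⟨i, hi1, hik, hai1, hai2⟩ | ha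
    · rcases mem_multEmb_nz hm hbS hb0 with ⟨j, hj1, hjk, hbj1, hbj2⟩ | hb
      · -- both multiples
        have e1 : i * m.1 + j * m.1 = (i + j) * m.1 := by ring
        have e2 : i * m.2 + j * m.2 = (i + j) * m.2 := by ring
        have f1 : m.1 ≤ i * m.1 := Nat.le_mul_of_pos_left m.1 hi1
        have f2 : m.2 ≤ i * m.2 := Nat.le_mul_of_pos_left m.2 hi1
        have f3 : m.1 ≤ j * m.1 := Nat.le_mul_of_pos_left m.1 hj1
        have f4 : m.2 ≤ j * m.2 := Nat.le_mul_of_pos_left m.2 hj1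
        by_cases ht : i + j ≤ k
        · have g1 : (i + j) * m.1 ≤ k * m.1 := Nat.mul_le_mul_right m.1 ht
          have g2 : (i + j) * m.2 ≤ k * m.2 := Nat.mul_le_mul_right m.2 ht
          omega
        · have ht' : k + 1 ≤ i + j := by omega
          have g1 : (k + 1) * m.1 ≤ (i + j) * m.1 := Nat.mul_le_mul_right m.1 ht'
          have g2 : (k + 1) * m.2 ≤ (i + j) * m.2 := Nat.mul_le_mul_right m.2 ht'
          omega
      · -- a multiple, b large
        have f1 : m.1 ≤ i * m.1 := Nat.le_mul_of_pos_left m.1 hi1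
        have f2 : m.2 ≤ i * m.2 := Nat.le_mul_of_pos_left m.2 hi1
        omega
    · rcases mem_multEmb_nz hm hbS hb0 with ⟨j, hj1, hjk, hbj1, hbj2⟩ | hb
      · -- b multiple, a large
        have f3 : m.1 ≤ j * m.1 := Nat.le_mul_of_pos_left m.1 hj1
        have f4 : m.2 ≤ j * m.2 := Nat.le_mul_of_pos_left m.2 hj1
        omega
      · -- both large
        omega

lemma nz0 {x : ℕ × ℕ} (h : 1 ≤ x.1 + x.2) : x ∉ ({0} : Set (ℕ × ℕ)) := by
  intro hx
  rw [Set.mem_singleton_iff] at hx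
  subst hx
  simp at h

lemma msg_subset_U {k : ℕ} (hk : 1 ≤ k) {m : ℕ × ℕ} (hm : m ≠ 0) :
    msg2 (multEmb k m) ⊆ Uset k m := by
  have hp := hp_of hm
  have hm1 : m.1 ≤ k * m.1 := Nat.le_mul_of_pos_left m.1 hk
  have hm2 : m.2 ≤ k * m.2 := Nat.le_mul_of_pos_left m.2 hk
  have hr1 : (k + 1) * (m.1 + m.2) = k * m.1 + k * m.2 + (m.1 + m.2) := by ring
  have hr2 : 2 * k * (m.1 + m.2) = 2 * (k * m.1) + 2 * (k * m.2) := by ring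
  have hr3 : (k + 1) * m.1 = k * m.1 + m.1 := by ring
  have hr4 : (k + 1) * m.2 = k * m.2 + m.2 := by ring
  intro x hxmem
  obtain ⟨⟨hxS, hx0'⟩, hnsum⟩ := hxmem
  have hx0 : x ≠ 0 := hx0'
  rw [mem_U]
  by_contra hU
  have hA : ¬ (x.1 = m.1 ∧ x.2 = m.2) := fun h => hU (Or.inl h)
  have hB : ¬ ((k * m.1 + k * m.2 < x.1 + x.2 ∨ (k * m.1 + k * m.2 = x.1 + x.2 ∧ k * m.1 < x.1)) ∧
      (x.1 + x.2 < (k+1) * m.1 + (k+1) * m.2 ∨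
        (x.1 + x.2 = (k+1) * m.1 + (k+1) * m.2 ∧ x.1 < (k+1) * m.1))) :=
    fun h => hU (Or.inr (Or.inl h))
  have hC : ¬ ((k + 1) * (m.1 + m.2) ≤ x.1 + x.2 ∧
      x.1 + x.2 ≤ 2 * k * (m.1 + m.2) - 1 ∧ x.2 < m.2) := fun h => hU (Or.inr (Or.inr (Or.inl h)))
  have hD : ¬ ((k + 1) * (m.1 + m.2) + 1 ≤ x.1 + x.2 ∧
      x.1 + x.2 ≤ 2 * k * (m.1 + m.2) + 1 ∧ x.1 < m.1) := fun h => hU (Or.inr (Or.inr (Or.inr h)))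
  apply hnsum
  rcases mem_multEmb_nz hm hxS hx0 with ⟨i, hi1, hik, hxi1, hxi2⟩ | hglex
  · -- x = i • m with 1 ≤ i < k ; then i ≥ 2 and x = m + (i-1)m
    have hi2 : 2 ≤ i := by
      rcases Nat.lt_or_ge i 2 with h | h
      · exfalso
        have : i = 1 := by omega
        subst this
        exact hA ⟨by omega, by omega⟩
      · exact h
    have hsub1 : (i - 1) * m.1 = i * m.1 - m.1 := by rw [Nat.sub_mul, one_mul]
    have hsub2 : (i - 1) * m.2 = i * m.2 - m.2 := by rw [Nat.sub_mul, one_mul]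
    have f1 : m.1 ≤ i * m.1 := Nat.le_mul_of_pos_left m.1 hi1
    have f2 : m.2 ≤ i * m.2 := Nat.le_mul_of_pos_left m.2 hi1
    refine ⟨m, ⟨m_mem hk, nz0 hp⟩, (i - 1) • m, ⟨mem_S_mul (i-1) (by omega), nz0 ?_⟩, ?_⟩
    · rw [smul_fst', smul_snd']
      have g1 : m.1 ≤ (i-1) * m.1 := Nat.le_mul_of_pos_left m.1 (by omega)
      have g2 : m.2 ≤ (i-1) * m.2 := Nat.le_mul_of_pos_left m.2 (by omega)
      omega
    · have e1 : ((i-1) • m).1 = (i-1) * m.1 := smul_fst' _ _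
      have e2 : ((i-1) • m).2 = (i-1) * m.2 := smul_snd' _ _
      apply Prod.ext
      · show m.1 + ((i-1) • m).1 = x.1
        rw [e1]; omega
      · show m.2 + ((i-1) • m).2 = x.2
        rw [e2]; omega
  · -- k•m ⪯ x
    by_cases hlt : x.1 + x.2 < (k+1) * m.1 + (k+1) * m.2 ∨
        (x.1 + x.2 = (k+1) * m.1 + (k+1) * m.2 ∧ x.1 < (k+1) * m.1)
    · -- x ≺ (k+1)m, hence x = k•m and k ≥ 2
      have hx1 : x.1 = k * m.1 := by omega
      have hx2 : x.2 = k * m.2 := by omega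
      have hk2 : 2 ≤ k := by
        rcases Nat.lt_or_ge k 2 with h | h
        · exfalso
          have : k = 1 := by omega
          subst this
          exact hA ⟨by omega, by omega⟩
        · exact h
      have hsub1 : (k - 1) * m.1 = k * m.1 - m.1 := by rw [Nat.sub_mul, one_mul]
      have hsub2 : (k - 1) * m.2 = k * m.2 - m.2 := by rw [Nat.sub_mul, one_mul]
      refine ⟨m, ⟨m_mem hk, nz0 hp⟩, (k - 1) • m, ⟨mem_S_mul (k-1) (by omega), nz0 ?_⟩, ?_⟩
      · rw [smul_fst', smul_snd']
        have g1 : m.1 ≤ (k-1) * m.1 := Nat.le_mul_of_pos_left m.1 (by omega)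
        have g2 : m.2 ≤ (k-1) * m.2 := Nat.le_mul_of_pos_left m.2 (by omega)
        omega
      · have e1 : ((k-1) • m).1 = (k-1) * m.1 := smul_fst' _ _
        have e2 : ((k-1) • m).2 = (k-1) * m.2 := smul_snd' _ _
        apply Prod.ext
        · show m.1 + ((k-1) • m).1 = x.1
          rw [e1]; omega
        · show m.2 + ((k-1) • m).2 = x.2
          rw [e2]; omega
    · -- (k+1)m ⪯ x
      have h2 : (k+1) * m.1 + (k+1) * m.2 < x.1 + x.2 ∨
          (x.1 + x.2 = (k+1) * m.1 + (k+1) * m.2 ∧ (k+1) * m.1 ≤ x.1) := by omega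
      set K1 := k * m.1 with hK1
      set K2 := k * m.2 with hK2
      rcases Nat.lt_or_ge (x.1 + x.2) (2 * (K1 + K2)) with hs | hs
      · -- s ≤ 2kp - 1 : x ≥ m componentwise, use m + (x - m)
        have hx2 : m.2 ≤ x.2 := by omega
        have hx1 : m.1 ≤ x.1 := by omega
        refine ⟨m, ⟨m_mem hk, nz0 hp⟩, (x.1 - m.1, x.2 - m.2),
          ⟨mem_S_of_glex (by simp; omega), nz0 (by simp; omega)⟩, ?_⟩
        apply Prod.ext <;> simp <;> omega
      rcases Nat.lt_or_ge (x.1 + x.2) (2 * (K1 + K2) + 2) with hs2 | hs2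
      · -- s = 2kp or 2kp + 1
        rcases Nat.lt_or_ge x.2 m.2 with hx2 | hx2
        · -- x.2 < m.2 : split into two glex-large pieces at level kp / rest
          have hx1big : K1 ≤ x.1 := by omega
          set a1 := max K1 (x.1 - (K1 + K2 + (x.1 + x.2 - 2*(K1+K2)))) with ha1
          have hor : a1 = K1 ∨ a1 = x.1 - (K1 + K2 + (x.1 + x.2 - 2*(K1+K2))) := max_choice _ _
          have hge1 : K1 ≤ a1 := le_max_left _ _
          have hge2 : x.1 - (K1 + K2 + (x.1 + x.2 - 2*(K1+K2))) ≤ a1 := le_max_right _ _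
          have ha1le : a1 ≤ K1 + K2 := by omega
          refine ⟨(a1, K1 + K2 - a1), ⟨mem_S_of_glex (by simp; omega), nz0 (by simp; omega)⟩,
            (x.1 - a1, x.2 - (K1 + K2 - a1)),
            ⟨mem_S_of_glex (by simp; omega), nz0 (by simp; omega)⟩, ?_⟩
          apply Prod.ext <;> simp <;> omega
        · -- x ≥ m componentwise
          have hx1 : m.1 ≤ x.1 := by omega
          refine ⟨m, ⟨m_mem hk, nz0 hp⟩, (x.1 - m.1, x.2 - m.2),
            ⟨mem_S_of_glex (by simp; omega), nz0 (by simp; omega)⟩, ?_⟩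
          apply Prod.ext <;> simp <;> omega
      · -- s ≥ 2kp + 2 : split at level kp + 1
        set a1 := min x.1 (K1 + K2 + 1) with ha1
        have hor : a1 = x.1 ∨ a1 = K1 + K2 + 1 := min_choice _ _
        have hle1 : a1 ≤ x.1 := min_le_left _ _
        have hle2 : a1 ≤ K1 + K2 + 1 := min_le_right _ _
        refine ⟨(a1, K1 + K2 + 1 - a1), ⟨mem_S_of_glex (by simp; omega), nz0 (by simp; omega)⟩,
          (x.1 - a1, x.2 - (K1 + K2 + 1 - a1)),
          ⟨mem_S_of_glex (by simp; omega), nz0 (by simp; omega)⟩, ?_⟩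
        apply Prod.ext <;> simp <;> omega

lemma msgEq {k : ℕ} (hk : 1 ≤ k) {m : ℕ × ℕ} (hm : m ≠ 0) :
    msg2 (multEmb k m) = Uset k m :=
  Set.Subset.antisymm (msg_subset_U hk hm) (U_subset_msg hk hm)

lemma gauss (n : ℕ) : 2 * (∑ i ∈ Finset.range n, (i + 1)) = n * (n + 1) := by
  induction n with
  | zero => simp
  | succ n ih => rw [Finset.sum_range_succ, Nat.mul_add, ih]; ring

section counting

variable (k : ℕ) (m : ℕ × ℕ)

def F2a : Finset (ℕ × ℕ) :=
  (Finset.Ico (k * m.1 + 1) (k * (m.1 + m.2) + 1)).image (fun a => (a, k * (m.1 + m.2) - a))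

def F2b : Finset (ℕ × ℕ) :=
  (Finset.Ico (k * (m.1 + m.2) + 1) ((k + 1) * (m.1 + m.2))).biUnion
    (fun s => (Finset.range (s + 1)).image (fun a => (a, s - a)))

def F2c : Finset (ℕ × ℕ) :=
  (Finset.range ((k + 1) * m.1)).image (fun a => (a, (k + 1) * (m.1 + m.2) - a))

def F3 : Finset (ℕ × ℕ) :=
  ((Finset.Icc ((k + 1) * (m.1 + m.2)) (2 * k * (m.1 + m.2) - 1)) ×ˢ Finset.range m.2).image
    (fun sy => (sy.1 - sy.2, sy.2))

def F4 : Finset (ℕ × ℕ) :=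
  ((Finset.Icc ((k + 1) * (m.1 + m.2) + 1) (2 * k * (m.1 + m.2) + 1)) ×ˢ Finset.range m.1).image
    (fun sy => (sy.2, sy.1 - sy.2))

end counting

lemma set2_eq {k : ℕ} (hk : 1 ≤ k) {m : ℕ × ℕ} (hm : m ≠ 0) :
    {x : ℕ × ℕ | glexLt (k • m) x ∧ glexLt x ((k + 1) • m)} = ↑(F2a k m ∪ F2b k m ∪ F2c k m) := by
  have hp := hp_of hm
  have hm1 : m.1 ≤ k * m.1 := Nat.le_mul_of_pos_left m.1 hk
  have hm2 : m.2 ≤ k * m.2 := Nat.le_mul_of_pos_left m.2 hk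
  have hr1 : (k + 1) * (m.1 + m.2) = k * m.1 + k * m.2 + (m.1 + m.2) := by ring
  have hr3 : (k + 1) * m.1 = k * m.1 + m.1 := by ring
  have hr4 : (k + 1) * m.2 = k * m.2 + m.2 := by ring
  have hr5 : k * (m.1 + m.2) = k * m.1 + k * m.2 := by ring
  ext ⟨x1, x2⟩
  simp only [Set.mem_setOf_eq, glexLt, smul_fst', smul_snd', Finset.coe_union, Set.mem_union,
    Finset.mem_coe, F2a, F2b, F2c, Finset.mem_image, Finset.mem_biUnion, Finset.mem_Ico,
    Finset.mem_range, Prod.mk.injEq]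
  constructor
  · rintro ⟨h1, h2⟩
    rcases Nat.lt_or_ge (k * (m.1 + m.2)) (x1 + x2) with hs | hs
    · rcases Nat.lt_or_ge (x1 + x2) ((k + 1) * (m.1 + m.2)) with hs2 | hs2
      · -- middle slice
        exact Or.inl (Or.inr ⟨x1 + x2, ⟨by omega, by omega⟩, x1, by omega, by omega, by omega⟩)
      · -- top slice
        refine Or.inr ⟨x1, by omega, by omega, by omega⟩
    · -- bottom slice
      exact Or.inl (Or.inl ⟨x1, ⟨by omega, by omega⟩, by omega, by omega⟩)
  · rintro ((⟨a, ⟨ha1, ha2⟩, he1, he2⟩ | ⟨s, ⟨hs1, hs2⟩, a, ha, he1, he2⟩) | ⟨a, ha, he1, he2⟩) <;>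
      constructor <;> omega

lemma set3_eq {k : ℕ} (hk : 1 ≤ k) {m : ℕ × ℕ} (hm : m ≠ 0) :
    {x : ℕ × ℕ | (k + 1) * (m.1 + m.2) ≤ x.1 + x.2 ∧
      x.1 + x.2 ≤ 2 * k * (m.1 + m.2) - 1 ∧ x.2 < m.2} = ↑(F3 k m) := by
  have hp := hp_of hm
  have hr1 : (k + 1) * (m.1 + m.2) = k * m.1 + k * m.2 + (m.1 + m.2) := by ring
  ext ⟨x1, x2⟩
  simp only [Set.mem_setOf_eq, F3, Finset.coe_image, Set.mem_image, Finset.mem_coe,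
    Finset.mem_product, Finset.mem_Icc, Finset.mem_range, Prod.exists, Prod.mk.injEq]
  constructor
  · rintro ⟨h1, h2, h3⟩
    exact ⟨x1 + x2, x2, ⟨⟨by omega, by omega⟩, by omega⟩, by omega, by omega⟩
  · rintro ⟨s, y, ⟨⟨hs1, hs2⟩, hy⟩, he1, he2⟩
    refine ⟨by omega, by omega, by omega⟩

lemma set4_eq {k : ℕ} (hk : 1 ≤ k) {m : ℕ × ℕ} (hm : m ≠ 0) :
    {x : ℕ × ℕ | (k + 1) * (m.1 + m.2) + 1 ≤ x.1 + x.2 ∧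
      x.1 + x.2 ≤ 2 * k * (m.1 + m.2) + 1 ∧ x.1 < m.1} = ↑(F4 k m) := by
  have hp := hp_of hm
  have hr1 : (k + 1) * (m.1 + m.2) = k * m.1 + k * m.2 + (m.1 + m.2) := by ring
  ext ⟨x1, x2⟩
  simp only [Set.mem_setOf_eq, F4, Finset.coe_image, Set.mem_image, Finset.mem_coe,
    Finset.mem_product, Finset.mem_Icc, Finset.mem_range, Prod.exists, Prod.mk.injEq]
  constructor
  · rintro ⟨h1, h2, h3⟩
    exact ⟨x1 + x2, x1, ⟨⟨by omega, by omega⟩, by omega⟩, by omega, by omega⟩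
  · rintro ⟨s, y, ⟨⟨hs1, hs2⟩, hy⟩, he1, he2⟩
    refine ⟨by omega, by omega, by omega⟩

lemma fst_inj {c : ℕ} : Function.Injective (fun a : ℕ => (a, c - a)) := by
  intro a b h
  simpa using congrArg Prod.fst h

lemma cardF2a (k : ℕ) (m : ℕ × ℕ) :
    (F2a k m).card = k * (m.1 + m.2) + 1 - (k * m.1 + 1) := by
  rw [F2a, Finset.card_image_of_injective _ fst_inj, Nat.card_Ico]

lemma cardF2b (k : ℕ) (m : ℕ × ℕ) :
    (F2b k m).card =
      ∑ s ∈ Finset.Ico (k * (m.1 + m.2) + 1) ((k + 1) * (m.1 + m.2)), (s + 1) := by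
  rw [F2b, Finset.card_biUnion]
  · exact Finset.sum_congr rfl fun s _ => by
      rw [Finset.card_image_of_injective _ fst_inj, Finset.card_range]
  · intro s hs t ht hst
    rw [Function.onFun, Finset.disjoint_left]
    rintro ⟨x1, x2⟩ hx1 hx2
    simp only [Finset.mem_image, Finset.mem_range, Prod.mk.injEq] at hx1 hx2
    obtain ⟨a, ha, rfl, rfl⟩ := hx1
    obtain ⟨b, hb, h1, h2⟩ := hx2
    omega

lemma cardF2c (k : ℕ) (m : ℕ × ℕ) : (F2c k m).card = (k + 1) * m.1 := by
  rw [F2c, Finset.card_image_of_injective _ fst_inj, Finset.card_range]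

lemma cardF3 {k : ℕ} (hk : 1 ≤ k) {m : ℕ × ℕ} (hm : m ≠ 0) :
    (F3 k m).card = (2 * k * (m.1 + m.2) - 1 + 1 - ((k + 1) * (m.1 + m.2))) * m.2 := by
  have hp := hp_of hm
  have hr1 : (k + 1) * (m.1 + m.2) = k * m.1 + k * m.2 + (m.1 + m.2) := by ring
  rw [F3, Finset.card_image_of_injOn, Finset.card_product, Nat.card_Icc, Finset.card_range]
  rintro ⟨s, y⟩ h1 ⟨s', y'⟩ h2 he
  simp only [Finset.coe_product, Set.mem_prod, Finset.mem_coe, Finset.mem_Icc,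
    Finset.mem_range] at h1 h2
  simp only [Prod.mk.injEq] at he ⊢
  omega

lemma cardF4 {k : ℕ} (hk : 1 ≤ k) {m : ℕ × ℕ} (hm : m ≠ 0) :
    (F4 k m).card = (2 * k * (m.1 + m.2) + 1 + 1 - ((k + 1) * (m.1 + m.2) + 1)) * m.1 := by
  have hp := hp_of hm
  have hr1 : (k + 1) * (m.1 + m.2) = k * m.1 + k * m.2 + (m.1 + m.2) := by ring
  rw [F4, Finset.card_image_of_injOn, Finset.card_product, Nat.card_Icc, Finset.card_range]
  rintro ⟨s, y⟩ h1 ⟨s', y'⟩ h2 he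
  simp only [Finset.coe_product, Set.mem_prod, Finset.mem_coe, Finset.mem_Icc,
    Finset.mem_range] at h1 h2
  simp only [Prod.mk.injEq] at he ⊢
  omega

lemma dF2ab (k : ℕ) (m : ℕ × ℕ) : Disjoint (F2a k m) (F2b k m) := by
  rw [Finset.disjoint_left]
  rintro ⟨x1, x2⟩ hx1 hx2
  simp only [F2a, F2b, Finset.mem_image, Finset.mem_biUnion, Finset.mem_Ico, Finset.mem_range,
    Prod.mk.injEq] at hx1 hx2
  obtain ⟨a, ha, rfl, rfl⟩ := hx1
  obtain ⟨s, hs, b, hb, h1, h2⟩ := hx2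
  omega

lemma dF2ac (k : ℕ) (m : ℕ × ℕ) (hm : m ≠ 0) : Disjoint (F2a k m) (F2c k m) := by
  have hp := hp_of hm
  have hr1 : (k + 1) * (m.1 + m.2) = k * m.1 + k * m.2 + (m.1 + m.2) := by ring
  have hr5 : k * (m.1 + m.2) = k * m.1 + k * m.2 := by ring
  have hr6 : (k + 1) * m.1 ≤ (k + 1) * (m.1 + m.2) := Nat.mul_le_mul_left _ (by omega)
  rw [Finset.disjoint_left]
  rintro ⟨x1, x2⟩ hx1 hx2
  simp only [F2a, F2c, Finset.mem_image, Finset.mem_Ico, Finset.mem_range,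
    Prod.mk.injEq] at hx1 hx2
  obtain ⟨a, ha, rfl, rfl⟩ := hx1
  obtain ⟨b, hb, h1, h2⟩ := hx2
  omega

lemma dF2bc (k : ℕ) (m : ℕ × ℕ) (hm : m ≠ 0) : Disjoint (F2b k m) (F2c k m) := by
  have hp := hp_of hm
  have hr6 : (k + 1) * m.1 ≤ (k + 1) * (m.1 + m.2) := Nat.mul_le_mul_left _ (by omega)
  rw [Finset.disjoint_left]
  rintro ⟨x1, x2⟩ hx1 hx2
  simp only [F2b, F2c, Finset.mem_image, Finset.mem_biUnion, Finset.mem_Ico, Finset.mem_range,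
    Prod.mk.injEq] at hx1 hx2
  obtain ⟨s, hs, a, ha, rfl, rfl⟩ := hx1
  obtain ⟨b, hb, h1, h2⟩ := hx2
  omega

lemma cardU {k : ℕ} (hk : 1 ≤ k) {m : ℕ × ℕ} (hm : m ≠ 0) :
    2 * (Uset k m).ncard = (4 * k - 1) * (m.1 + m.2) ^ 2 + (m.1 + m.2) + 4 * m.1 := by
  have hp := hp_of hm
  have hm1 : m.1 ≤ k * m.1 := Nat.le_mul_of_pos_left m.1 hk
  have hm2 : m.2 ≤ k * m.2 := Nat.le_mul_of_pos_left m.2 hk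
  have hr1 : (k + 1) * (m.1 + m.2) = k * m.1 + k * m.2 + (m.1 + m.2) := by ring
  have hr3 : (k + 1) * m.1 = k * m.1 + m.1 := by ring
  have hr4 : (k + 1) * m.2 = k * m.2 + m.2 := by ring
  have hr5 : k * (m.1 + m.2) = k * m.1 + k * m.2 := by ring
  have hb2 : (k + 1) * (m.1 + m.2) ≤ 2 * k * (m.1 + m.2) :=
    Nat.mul_le_mul_right _ (by omega)
  have hU : Uset k m = (↑(({m} : Finset (ℕ × ℕ)) ∪ (F2a k m ∪ F2b k m ∪ F2c k m) ∪ F3 k m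
      ∪ F4 k m) : Set (ℕ × ℕ)) := by
    unfold Uset
    rw [set2_eq hk hm, set3_eq hk hm, set4_eq hk hm]
    simp only [Finset.coe_union, Finset.coe_singleton]
  -- set-level disjointness
  have d1 : Disjoint ({m} : Finset (ℕ × ℕ)) (F2a k m ∪ F2b k m ∪ F2c k m) := by
    rw [← Finset.disjoint_coe, ← set2_eq hk hm, Finset.coe_singleton, Set.disjoint_left]
    rintro x hx1 ⟨h1, h2⟩
    rw [Set.mem_singleton_iff] at hx1
    subst hx1
    simp only [glexLt, smul_fst', smul_snd'] at h1
    omega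
  have d2 : Disjoint (({m} : Finset (ℕ × ℕ)) ∪ (F2a k m ∪ F2b k m ∪ F2c k m)) (F3 k m) := by
    rw [← Finset.disjoint_coe, ← set3_eq hk hm, Finset.coe_union, Finset.coe_singleton,
      ← set2_eq hk hm, Set.disjoint_left]
    rintro x (hx1 | hx1) ⟨h1, h2, h3⟩
    · rw [Set.mem_singleton_iff] at hx1
      subst hx1
      omega
    · obtain ⟨g1, g2⟩ := hx1
      simp only [glexLt, smul_fst', smul_snd'] at g1 g2
      omega
  have d3 : Disjoint ((({m} : Finset (ℕ × ℕ)) ∪ (F2a k m ∪ F2b k m ∪ F2c k m)) ∪ F3 k m)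
      (F4 k m) := by
    rw [← Finset.disjoint_coe, ← set4_eq hk hm, Finset.coe_union, Finset.coe_union,
      Finset.coe_singleton, ← set2_eq hk hm, ← set3_eq hk hm, Set.disjoint_left]
    rintro x ((hx1 | hx1) | hx1) ⟨h1, h2, h3⟩
    · rw [Set.mem_singleton_iff] at hx1
      subst hx1
      omega
    · obtain ⟨g1, g2⟩ := hx1
      simp only [glexLt, smul_fst', smul_snd'] at g1 g2
      omega
    · obtain ⟨g1, g2, g3⟩ := hx1
      omega
  have dF2 : Disjoint (F2a k m ∪ F2b k m) (F2c k m) :=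
    Finset.disjoint_union_left.2 ⟨dF2ac k m hm, dF2bc k m hm⟩
  rw [hU, Set.ncard_coe_finset, Finset.card_union_of_disjoint d3,
    Finset.card_union_of_disjoint d2, Finset.card_union_of_disjoint d1,
    Finset.card_union_of_disjoint dF2, Finset.card_union_of_disjoint (dF2ab k m),
    Finset.card_singleton, cardF2a, cardF2b, cardF2c, cardF3 hk hm, cardF4 hk hm]
  -- arithmetic
  set M := ∑ s ∈ Finset.Ico (k * (m.1 + m.2) + 1) ((k + 1) * (m.1 + m.2)), (s + 1) with hMdef
  have g1 : 2 * (∑ i ∈ Finset.range (k * (m.1 + m.2) + 1), (i + 1)) =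
      (k * (m.1 + m.2) + 1) * (k * (m.1 + m.2) + 1 + 1) := gauss _
  have g2 : 2 * (∑ i ∈ Finset.range ((k + 1) * (m.1 + m.2)), (i + 1)) =
      ((k + 1) * (m.1 + m.2)) * ((k + 1) * (m.1 + m.2) + 1) := gauss _
  have hconsec : (∑ i ∈ Finset.range (k * (m.1 + m.2) + 1), (i + 1)) + M =
      ∑ i ∈ Finset.range ((k + 1) * (m.1 + m.2)), (i + 1) := by
    rw [Finset.range_eq_Ico, Finset.range_eq_Ico]
    exact Finset.sum_Ico_consecutive (fun i : ℕ => i + 1) (Nat.zero_le (k * (m.1 + m.2) + 1))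
      (by omega : k * (m.1 + m.2) + 1 ≤ (k + 1) * (m.1 + m.2))
  have e1 : (k * (m.1 + m.2) + 1) * (k * (m.1 + m.2) + 1 + 1) =
      k * (m.1 + m.2) * (k * (m.1 + m.2)) + 3 * (k * (m.1 + m.2)) + 2 := by ring
  have e2 : ((k + 1) * (m.1 + m.2)) * ((k + 1) * (m.1 + m.2) + 1) =
      k * (m.1 + m.2) * (k * (m.1 + m.2)) + 2 * (k * (m.1 + m.2) * (m.1 + m.2)) +
        (m.1 + m.2) * (m.1 + m.2) + k * (m.1 + m.2) + (m.1 + m.2) := by ring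
  have et : (4 * k - 1) * (m.1 + m.2) ^ 2 =
      4 * (k * (m.1 + m.2) * (m.1 + m.2)) - (m.1 + m.2) * (m.1 + m.2) := by
    rw [Nat.sub_mul, one_mul,
      show 4 * k * (m.1 + m.2) ^ 2 = 4 * (k * (m.1 + m.2) * (m.1 + m.2)) from by ring,
      show (m.1 + m.2) ^ 2 = (m.1 + m.2) * (m.1 + m.2) from sq (m.1+m.2)]
  have eord : (m.1 + m.2) * (m.1 + m.2) ≤ k * (m.1 + m.2) * (m.1 + m.2) :=
    Nat.mul_le_mul_right _ (Nat.le_mul_of_pos_left _ hk)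
  have hs3 : (2 * k * (m.1 + m.2) - 1 + 1 - ((k + 1) * (m.1 + m.2))) * m.2 +
      ((k + 1) * (m.1 + m.2)) * m.2 = (2 * k * (m.1 + m.2)) * m.2 := by
    rw [← Nat.add_mul]
    congr 1
    omega
  have hs4 : (2 * k * (m.1 + m.2) + 1 + 1 - ((k + 1) * (m.1 + m.2) + 1)) * m.1 +
      ((k + 1) * (m.1 + m.2)) * m.1 = (2 * k * (m.1 + m.2)) * m.1 + m.1 := by
    rw [← Nat.add_mul,
      show 2 * k * (m.1 + m.2) + 1 + 1 - ((k + 1) * (m.1 + m.2) + 1) + (k + 1) * (m.1 + m.2) =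
        2 * k * (m.1 + m.2) + 1 from by omega, Nat.add_mul, one_mul]
  have e5 : ((k + 1) * (m.1 + m.2)) * m.2 = k * (m.1 + m.2) * m.2 + (m.1 + m.2) * m.2 := by ring
  have e6 : ((k + 1) * (m.1 + m.2)) * m.1 = k * (m.1 + m.2) * m.1 + (m.1 + m.2) * m.1 := by ring
  have e7 : (2 * k * (m.1 + m.2)) * m.2 = 2 * (k * (m.1 + m.2) * m.2) := by ring
  have e8 : (2 * k * (m.1 + m.2)) * m.1 = 2 * (k * (m.1 + m.2) * m.1) := by ring
  have e9 : k * (m.1 + m.2) * m.1 + k * (m.1 + m.2) * m.2 =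
      k * (m.1 + m.2) * (m.1 + m.2) := by ring
  have e10 : (m.1 + m.2) * m.1 + (m.1 + m.2) * m.2 = (m.1 + m.2) * (m.1 + m.2) := by ring
  omega

/-- Minimal generating set and embedding dimension of the mult-embedded ℕ²-semigroup with
multiplicity m and conductor km, under the graded lexicographic order. -/
theorem statement18 (k : ℕ) (hk : 1 ≤ k) (m : ℕ × ℕ) (hm : m ≠ 0) :
    msg2 (multEmb k m) =
      ({m} ∪
        {x : ℕ × ℕ | glexLt (k • m) x ∧ glexLt x ((k + 1) • m)} ∪
        {x : ℕ × ℕ | (k + 1) * (m.1 + m.2) ≤ x.1 + x.2 ∧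
          x.1 + x.2 ≤ 2 * k * (m.1 + m.2) - 1 ∧ x.2 < m.2} ∪
        {x : ℕ × ℕ | (k + 1) * (m.1 + m.2) + 1 ≤ x.1 + x.2 ∧
          x.1 + x.2 ≤ 2 * k * (m.1 + m.2) + 1 ∧ x.1 < m.1}) ∧
    (msg2 (multEmb k m)).ncard =
      ((4 * k - 1) * (m.1 + m.2) ^ 2 + (m.1 + m.2) + 4 * m.1) / 2 := by
  have h1 : msg2 (multEmb k m) = Uset k m := msgEq hk hm
  refine ⟨h1, ?_⟩
  rw [h1]
  have h2 := cardU hk hm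
  omega
end
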